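/- Let G be a group, let A, B ≤ G be subgroups, let φ: B → A be a group isomorphism, and suppose there exists a group homomorphism π: G → A × B with π(a) = (a,1) for all a ∈ A and π(b) = (1,b) for all b ∈ B. Form the amalgamated free product G *_φ G of two copies of G obtained by identifying the subgroup B of the first copy with the subgroup A of the second copy via φ. Then there exist a surjective homomorphism ρ: G *_φ G → A * B and an injective homomorphism s: A * B → G *_φ G with ρ ∘ s = id; in particular G *_φ G is an internal semidirect product (A * B) ⋉ ker ρ. -/

import Mathlib

/-!
Send the first copy of `G` to `A ∗ B` through the `A`-component of `π` and the second copy through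
its `B`-component. Both maps kill the amalgamated subgroup (`π` has trivial `A`-part on `B` and
trivial `B`-part on `A`), so they descend to `ρ : G ∗_φ G → A ∗ B`. Including `A` into the first
copy and `B` into the second gives `s : A ∗ B → G ∗_φ G`, and `ρ ∘ s = id` because `π` restricts
to the identity on `A` and on `B`. A split surjection of groups exhibits its source as the product
of the image of the section and the kernel.
-/

universe u

section Amalgam

variable {G₁ : Type u} {G₂ : Type u} [Group G₁] [Group G₂]

/-- The relators identifying `H₁ ≤ G₁` with `H₂ ≤ G₂` via `φ` inside the free product. -/
def amalRels (H₁ : Subgroup G₁) (H₂ : Subgroup G₂) (φ : H₁ ≃* H₂) :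
    Set (Monoid.Coprod G₁ G₂) :=
  ⋃ h : H₁, {Monoid.Coprod.inl (h : G₁) *
    (Monoid.Coprod.inr ((φ h : G₂)) : Monoid.Coprod G₁ G₂)⁻¹}

/-- The amalgamated free product `G₁ ∗_φ G₂`: the quotient of the free product `G₁ ∗ G₂` by
the normal closure of `{h · φ(h)⁻¹ : h ∈ H₁}`. -/
def Amal (H₁ : Subgroup G₁) (H₂ : Subgroup G₂) (φ : H₁ ≃* H₂) : Type u :=
  Monoid.Coprod G₁ G₂ ⧸ Subgroup.normalClosure (amalRels H₁ H₂ φ)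

instance (H₁ : Subgroup G₁) (H₂ : Subgroup G₂) (φ : H₁ ≃* H₂) : Group (Amal H₁ H₂ φ) :=
  inferInstanceAs (Group (Monoid.Coprod G₁ G₂ ⧸ Subgroup.normalClosure (amalRels H₁ H₂ φ)))

end Amalgam

namespace Amal

variable {G₁ G₂ : Type u} [Group G₁] [Group G₂] {H₁ : Subgroup G₁} {H₂ : Subgroup G₂}
  {φ : H₁ ≃* H₂}

def inl : G₁ →* Amal H₁ H₂ φ :=
  (QuotientGroup.mk' _).comp Monoid.Coprod.inl

def inr : G₂ →* Amal H₁ H₂ φ :=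
  (QuotientGroup.mk' _).comp Monoid.Coprod.inr

variable {P : Type*} [Group P]

theorem normalClosure_amalRels_le_ker {f₁ : G₁ →* P} {f₂ : G₂ →* P}
    (hf : ∀ h : H₁, f₁ h = f₂ (φ h)) :
    Subgroup.normalClosure (amalRels H₁ H₂ φ) ≤ (Monoid.Coprod.lift f₁ f₂).ker := by
  refine Subgroup.normalClosure_le_normal ?_
  rintro _ ⟨_, ⟨h, rfl⟩, rfl⟩
  simp [hf]

def lift (f₁ : G₁ →* P) (f₂ : G₂ →* P) (hf : ∀ h : H₁, f₁ h = f₂ (φ h)) :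
    Amal H₁ H₂ φ →* P :=
  QuotientGroup.lift _ (Monoid.Coprod.lift f₁ f₂) (normalClosure_amalRels_le_ker hf)

@[simp]
theorem lift_inl (f₁ : G₁ →* P) (f₂ : G₂ →* P) (hf : ∀ h : H₁, f₁ h = f₂ (φ h)) (g : G₁) :
    lift f₁ f₂ hf (inl g) = f₁ g :=
  Monoid.Coprod.lift_apply_inl f₁ f₂ g

@[simp]
theorem lift_inr (f₁ : G₁ →* P) (f₂ : G₂ →* P) (hf : ∀ h : H₁, f₁ h = f₂ (φ h)) (g : G₂) :
    lift f₁ f₂ hf (inr g) = f₂ g :=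
  Monoid.Coprod.lift_apply_inr f₁ f₂ g

end Amal

theorem MonoidHom.exists_eq_mul_ker_of_comp_eq_id {G H : Type*} [Group G] [Group H]
    {ρ : G →* H} {s : H →* G} (hρs : ρ.comp s = MonoidHom.id H) (x : G) :
    ∃ (w : H) (y : ρ.ker), x = s w * y := by
  have hy : (s (ρ x))⁻¹ * x ∈ ρ.ker := by
    rw [MonoidHom.mem_ker, map_mul, map_inv, ← MonoidHom.comp_apply, hρs]
    exact inv_mul_cancel _
  exact ⟨ρ x, ⟨_, hy⟩, (mul_inv_cancel_left _ _).symm⟩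

section Retraction

variable {G : Type u} [Group G] {A B : Subgroup G} (φ : B ≃* A) {π : G →* A × B}

def amalToCoprod (hπA : ∀ a : A, π (a : G) = (a, 1)) (hπB : ∀ b : B, π (b : G) = (1, b)) :
    Amal B A φ →* Monoid.Coprod A B :=
  Amal.lift (Monoid.Coprod.inl.comp ((MonoidHom.fst A B).comp π))
    (Monoid.Coprod.inr.comp ((MonoidHom.snd A B).comp π))
    (fun b ↦ by simp [hπA, hπB])

def coprodToAmal : Monoid.Coprod A B →* Amal B A φ :=
  Monoid.Coprod.lift (Amal.inl.comp A.subtype) (Amal.inr.comp B.subtype)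

theorem amalToCoprod_comp_coprodToAmal (hπA : ∀ a : A, π (a : G) = (a, 1))
    (hπB : ∀ b : B, π (b : G) = (1, b)) :
    (amalToCoprod φ hπA hπB).comp (coprodToAmal φ) = MonoidHom.id (Monoid.Coprod A B) := by
  ext a <;> simp [amalToCoprod, coprodToAmal, hπA, hπB]

end Retraction

/-- **Lemma.** Suppose `φ : B → A` is an isomorphism of subgroups of `G` and there is a
homomorphism `π : G → A × B` with `π(a) = (a,1)` for `a ∈ A` and `π(b) = (1,b)` for `b ∈ B`.
Then `G ∗_φ G` (identifying `B` in the first copy with `A` in the second via `φ`) splits as an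
internal semidirect product `(A ∗ B) ⋉ ker ρ`: there is a surjection `ρ : G ∗_φ G → A ∗ B`
split by an injection `s : A ∗ B → G ∗_φ G`. -/
theorem amalgam_splits_over_free_product {G : Type u} [Group G]
    (A B : Subgroup G) (φ : B ≃* A) (π : G →* A × B)
    (hπA : ∀ a : A, π (a : G) = (a, 1)) (hπB : ∀ b : B, π (b : G) = (1, b)) :
    ∃ (ρ : Amal B A φ →* Monoid.Coprod A B) (s : Monoid.Coprod A B →* Amal B A φ),
      Function.Surjective ρ ∧ Function.Injective s ∧
      ρ.comp s = MonoidHom.id (Monoid.Coprod A B) ∧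
      ∀ x : Amal B A φ, ∃ (w : Monoid.Coprod A B) (y : ρ.ker), x = s w * (y : Amal B A φ) := by
  have hρs := amalToCoprod_comp_coprodToAmal φ hπA hπB
  have hinv : Function.LeftInverse (amalToCoprod φ hπA hπB) (coprodToAmal φ) :=
    DFunLike.congr_fun hρs
  exact ⟨_, _, hinv.surjective, hinv.injective, hρs,
    MonoidHom.exists_eq_mul_ker_of_comp_eq_id hρs⟩
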